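/- arXiv:1403.2675 — 2 statements merged into one kernel-verified Lean document; each statement's English description precedes it below -/
import Mathlib

section
/- Let G = PU(n) ⋊ ⟨τ₀⟩ and G̃ = (U(n)/⟨−I⟩) ⋊ ⟨τ⟩, and let π' : G̃ → G be the natural surjection (induced by U(n)/⟨−I⟩ → PU(n) and τ ↦ τ₀), whose kernel is Z_n/⟨−I⟩. If F is an abelian subgroup of G not contained in PU(n), then there exists an abelian subgroup F' of G̃ such that π'(F') = F and F' ∩ (Z_n/⟨−I⟩) = ⟨[iI_n]⟩, the order-2 subgroup generated by the class of iI_n. Moreover, F' is determined by F up to conjugation by an element of Z_n/⟨−I⟩. -/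
/-!
Write `π'` for the projection and `M = ker π' = Z/⟨-I⟩`, and lift an element of `F` outside
`PU(n)` to some `t ∈ G̃`. Conjugation by `t` inverts `M` (complex conjugation inverts scalars)
and `M` is 2-divisible. Hence `M ∩ C(t)` is the 2-torsion `{1, [iI]}` of `M`; every element of
`π'⁻¹(F)` commutes with `t` after correction by an element of `M`; and any other lift of `π'(t)`
is a conjugate of `t` by an element of `M`. The lift is `F' = π'⁻¹(F) ∩ C(t)`; any other
admissible `F''` equals `π'⁻¹(F) ∩ C(t'')` for its own lift `t''` of `π'(t)`.

`F'` is abelian because, for `t = (a, τ)`, two elements of `U(n)/⟨-I⟩` fixed by `x ↦ a x̄ a⁻¹`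
whose commutator is scalar commute: the commutator of their lifts to `U(n)` is a scalar that
this twisted conjugation both fixes and inverts, so it is `±I`.
-/

open Matrix

noncomputable section

/-- The unitary group `U(ι)` of complex unitary matrices indexed by `ι`. -/
abbrev UG (ι : Type) [Fintype ι] [DecidableEq ι] := Matrix.unitaryGroup ι ℂ

variable (ι : Type) [Fintype ι] [DecidableEq ι]

/-- The central subgroup `Z_n = {λ I : |λ| = 1}` of scalar unitary matrices. -/
def scalarSG : Subgroup (UG ι) where
  carrier := {A | ∃ c : ℂ, ‖c‖ = 1 ∧ (A : Matrix ι ι ℂ) = c • (1 : Matrix ι ι ℂ)}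
  one_mem' := ⟨1, by simp, by simp⟩
  mul_mem' := by
    rintro A B ⟨a, ha, hA⟩ ⟨b, hb, hB⟩
    exact ⟨a * b, by simp [ha, hb], by
      simp only [Matrix.UnitaryGroup.mul_val, hA, hB, smul_mul_smul_comm, mul_one]⟩
  inv_mem' := by
    rintro A ⟨a, ha, hA⟩
    refine ⟨star a, by simpa using ha, ?_⟩
    have : ((A⁻¹ : UG ι) : Matrix ι ι ℂ) = star (A : Matrix ι ι ℂ) :=
      Matrix.UnitaryGroup.inv_val A
    rw [this, hA]
    simp [Matrix.star_eq_conjTranspose, Matrix.conjTranspose_smul]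

instance scalarSG_normal : (scalarSG ι).Normal := by
  constructor
  rintro A ⟨a, ha, hA⟩ g
  refine ⟨a, ha, ?_⟩
  have h1 : ((g * A * g⁻¹ : UG ι) : Matrix ι ι ℂ)
      = (g : Matrix ι ι ℂ) * (A : Matrix ι ι ℂ) * ((g⁻¹ : UG ι) : Matrix ι ι ℂ) := rfl
  rw [h1, hA]
  have h2 : (g : Matrix ι ι ℂ) * ((g⁻¹ : UG ι) : Matrix ι ι ℂ) = 1 := by
    have := Matrix.UnitaryGroup.mul_val g g⁻¹
    rw [mul_inv_cancel] at this
    simpa using this.symm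
  calc (g : Matrix ι ι ℂ) * (a • (1 : Matrix ι ι ℂ)) * ((g⁻¹ : UG ι) : Matrix ι ι ℂ)
      = a • ((g : Matrix ι ι ℂ) * ((g⁻¹ : UG ι) : Matrix ι ι ℂ)) := by
        simp [mul_smul_comm, smul_mul_assoc]
    _ = a • (1 : Matrix ι ι ℂ) := by rw [h2]

/-- The projective unitary group `PU(ι) = U(ι)/Z`. -/
abbrev PU := UG ι ⧸ scalarSG ι

variable {ι}

lemma conjTranspose_map_conj (A : Matrix ι ι ℂ) :
    (A.map (starRingEnd ℂ))ᴴ = Aᵀ := by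
  ext i j
  simp [Matrix.conjTranspose_apply, Matrix.map_apply]

/-- Entrywise complex conjugation on the unitary group. -/
def conjUG (A : UG ι) : UG ι :=
  ⟨(A : Matrix ι ι ℂ).map (starRingEnd ℂ), by
    rw [Matrix.mem_unitaryGroup_iff]
    have h1 : ((A : Matrix ι ι ℂ) * star (A : Matrix ι ι ℂ)).map (starRingEnd ℂ)
        = (A : Matrix ι ι ℂ).map (starRingEnd ℂ)
          * (star (A : Matrix ι ι ℂ)).map (starRingEnd ℂ) :=
      Matrix.map_mul
    have hA : (A : Matrix ι ι ℂ) * star (A : Matrix ι ι ℂ) = 1 :=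
      Matrix.mem_unitaryGroup_iff.mp A.2
    rw [hA] at h1
    have h2 : ((1 : Matrix ι ι ℂ)).map (starRingEnd ℂ) = 1 := by
      ext i j; simp [Matrix.map_apply, Matrix.one_apply, apply_ite]
    have h3 : star ((A : Matrix ι ι ℂ).map (starRingEnd ℂ))
        = (star (A : Matrix ι ι ℂ)).map (starRingEnd ℂ) := by
      ext i j
      simp [Matrix.star_eq_conjTranspose, Matrix.conjTranspose_apply, Matrix.map_apply]
    rw [h3, ← h1, h2]⟩

@[simp] lemma conjUG_conjUG (A : UG ι) : conjUG (conjUG A) = A := by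
  apply Subtype.ext
  show ((A : Matrix ι ι ℂ).map (starRingEnd ℂ)).map (starRingEnd ℂ) = (A : Matrix ι ι ℂ)
  ext i j
  simp [Matrix.map_apply]

/-- Entrywise complex conjugation as an automorphism of the unitary group. -/
def conjUGE : UG ι ≃* UG ι where
  toFun := conjUG
  invFun := conjUG
  left_inv := conjUG_conjUG
  right_inv := conjUG_conjUG
  map_mul' A B := by
    apply Subtype.ext
    show ((A * B : UG ι) : Matrix ι ι ℂ).map (starRingEnd ℂ)
        = (A : Matrix ι ι ℂ).map (starRingEnd ℂ) * (B : Matrix ι ι ℂ).map (starRingEnd ℂ)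
    rw [Matrix.UnitaryGroup.mul_val]
    exact Matrix.map_mul

variable (ι)

lemma scalarSG_le_comap_conjUGE :
    scalarSG ι ≤ (scalarSG ι).comap (conjUGE : UG ι ≃* UG ι).toMonoidHom := by
  rintro A ⟨a, ha, hA⟩
  refine ⟨starRingEnd ℂ a, by simpa using ha, ?_⟩
  show ((A : Matrix ι ι ℂ).map (starRingEnd ℂ)) = _
  rw [hA]
  ext i j
  by_cases h : i = j <;>
    simp [Matrix.map_apply, Matrix.smul_apply, Matrix.one_apply, h]

/-- The complex conjugation automorphism `τ₀` of `PU(ι)`. -/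
def tauPU : PU ι ≃* PU ι where
  toFun := QuotientGroup.map (scalarSG ι) (scalarSG ι) (conjUGE : UG ι ≃* UG ι).toMonoidHom
    (scalarSG_le_comap_conjUGE ι)
  invFun := QuotientGroup.map (scalarSG ι) (scalarSG ι) (conjUGE : UG ι ≃* UG ι).toMonoidHom
    (scalarSG_le_comap_conjUGE ι)
  left_inv := by
    intro x
    induction x using QuotientGroup.induction_on with
    | H A => rw [QuotientGroup.map_mk, QuotientGroup.map_mk]
             exact congrArg _ (conjUG_conjUG A)
  right_inv := by
    intro x
    induction x using QuotientGroup.induction_on with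
    | H A => rw [QuotientGroup.map_mk, QuotientGroup.map_mk]
             exact congrArg _ (conjUG_conjUG A)
  map_mul' := map_mul _


end

noncomputable section

variable (ι : Type) [Fintype ι] [DecidableEq ι]

lemma tauPU_mul_tauPU : (tauPU ι) * (tauPU ι) = 1 :=
  DFunLike.ext _ _ fun x => by
    rw [MulAut.mul_apply, MulAut.one_apply]
    exact (tauPU ι).left_inv x

/-- The action of `⟨τ₀⟩ ≅ ℤ/2ℤ` on `PU(ι)` by complex conjugation. -/
def actPU : Multiplicative (ZMod 2) →* MulAut (PU ι) where
  toFun x := (tauPU ι) ^ (Multiplicative.toAdd x).val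
  map_one' := by
    show (tauPU ι) ^ (Multiplicative.toAdd (1 : Multiplicative (ZMod 2))).val = 1
    simp
  map_mul' a b := by
    show (tauPU ι) ^ (Multiplicative.toAdd (a * b)).val
        = (tauPU ι) ^ (Multiplicative.toAdd a).val * (tauPU ι) ^ (Multiplicative.toAdd b).val
    have h2 : (tauPU ι) ^ 2 = 1 := by rw [pow_two]; exact tauPU_mul_tauPU ι
    have hab : (Multiplicative.toAdd (a * b))
        = Multiplicative.toAdd a + Multiplicative.toAdd b := rfl
    rw [hab, ZMod.val_add, ← pow_eq_pow_mod _ h2, pow_add]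

/-- The group `PU(ι) ⋊ ⟨τ₀⟩`. -/
abbrev GA := SemidirectProduct (PU ι) (Multiplicative (ZMod 2)) (actPU ι)

end

noncomputable section

variable (ι : Type) [Fintype ι] [DecidableEq ι]

/-- `-I` as an element of the unitary group. -/
def negOneU : UG ι := ⟨(-1 : Matrix ι ι ℂ), by
  rw [Matrix.mem_unitaryGroup_iff]; simp⟩

/-- The central subgroup `⟨-I⟩` of the unitary group. -/
def negUSG : Subgroup (UG ι) := Subgroup.zpowers (negOneU ι)

lemma negOneU_mem_scalarSG : negOneU ι ∈ scalarSG ι :=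
  ⟨-1, by simp, by simp [negOneU]⟩

lemma negUSG_le_scalarSG : negUSG ι ≤ scalarSG ι :=
  Subgroup.zpowers_le.mpr (negOneU_mem_scalarSG ι)

instance negUSG_normal : (negUSG ι).Normal := by
  constructor
  intro x hx g
  obtain ⟨k, rfl⟩ := Subgroup.mem_zpowers_iff.mp hx
  have h2 : (g : Matrix ι ι ℂ) * ((g⁻¹ : UG ι) : Matrix ι ι ℂ) = 1 := by
    have := Matrix.UnitaryGroup.mul_val g g⁻¹
    rw [mul_inv_cancel] at this
    simpa using this.symm
  have hg : g * negOneU ι * g⁻¹ = negOneU ι := by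
    apply Subtype.ext
    show (g : Matrix ι ι ℂ) * ((negOneU ι : UG ι) : Matrix ι ι ℂ)
        * ((g⁻¹ : UG ι) : Matrix ι ι ℂ) = ((negOneU ι : UG ι) : Matrix ι ι ℂ)
    have hneg : ((negOneU ι : UG ι) : Matrix ι ι ℂ) = -1 := rfl
    rw [hneg]
    calc (g : Matrix ι ι ℂ) * (-1 : Matrix ι ι ℂ) * ((g⁻¹ : UG ι) : Matrix ι ι ℂ)
        = -((g : Matrix ι ι ℂ) * ((g⁻¹ : UG ι) : Matrix ι ι ℂ)) := by
          rw [mul_neg_one, neg_mul]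
      _ = -1 := by rw [h2]
  have hmap : g * (negOneU ι) ^ k * g⁻¹ = (g * negOneU ι * g⁻¹) ^ k := by
    have := map_zpow (MulAut.conj g) (negOneU ι) k
    simpa [MulAut.conj_apply] using this
  rw [hmap, hg]
  exact Subgroup.zpow_mem _ (Subgroup.mem_zpowers _) k

/-- The group `U(ι)/⟨-I⟩`. -/
abbrev UmodNeg := UG ι ⧸ negUSG ι

lemma conjUG_negOneU : conjUG (negOneU ι) = negOneU ι := by
  apply Subtype.ext
  show ((negOneU ι : UG ι) : Matrix ι ι ℂ).map (starRingEnd ℂ)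
      = ((negOneU ι : UG ι) : Matrix ι ι ℂ)
  have hneg : ((negOneU ι : UG ι) : Matrix ι ι ℂ) = -1 := rfl
  rw [hneg]
  ext i j
  by_cases h : i = j <;> simp [Matrix.map_apply, Matrix.one_apply, h]

lemma negUSG_le_comap_conjUGE :
    negUSG ι ≤ (negUSG ι).comap (conjUGE : UG ι ≃* UG ι).toMonoidHom := by
  intro x hx
  obtain ⟨k, rfl⟩ := Subgroup.mem_zpowers_iff.mp hx
  have : (conjUGE : UG ι ≃* UG ι) ((negOneU ι) ^ k) = (negOneU ι) ^ k := by
    rw [map_zpow]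
    have h1 : (conjUGE : UG ι ≃* UG ι) (negOneU ι) = negOneU ι := conjUG_negOneU ι
    rw [h1]
  show (conjUGE : UG ι ≃* UG ι) ((negOneU ι) ^ k) ∈ negUSG ι
  rw [this]
  exact Subgroup.zpow_mem _ (Subgroup.mem_zpowers _) k

/-- The complex conjugation automorphism `τ` of `U(ι)/⟨-I⟩`. -/
def tauU : UmodNeg ι ≃* UmodNeg ι where
  toFun := QuotientGroup.map (negUSG ι) (negUSG ι) (conjUGE : UG ι ≃* UG ι).toMonoidHom
    (negUSG_le_comap_conjUGE ι)
  invFun := QuotientGroup.map (negUSG ι) (negUSG ι) (conjUGE : UG ι ≃* UG ι).toMonoidHom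
    (negUSG_le_comap_conjUGE ι)
  left_inv := by
    intro x
    induction x using QuotientGroup.induction_on with
    | H A => rw [QuotientGroup.map_mk, QuotientGroup.map_mk]
             exact congrArg _ (conjUG_conjUG A)
  right_inv := by
    intro x
    induction x using QuotientGroup.induction_on with
    | H A => rw [QuotientGroup.map_mk, QuotientGroup.map_mk]
             exact congrArg _ (conjUG_conjUG A)
  map_mul' := map_mul _

lemma tauU_mul_tauU : (tauU ι) * (tauU ι) = 1 :=
  DFunLike.ext _ _ fun x => by
    rw [MulAut.mul_apply, MulAut.one_apply]
    exact (tauU ι).left_inv x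

/-- The action of `⟨τ⟩ ≅ ℤ/2ℤ` on `U(ι)/⟨-I⟩` by complex conjugation. -/
def actU : Multiplicative (ZMod 2) →* MulAut (UmodNeg ι) where
  toFun x := (tauU ι) ^ (Multiplicative.toAdd x).val
  map_one' := by
    show (tauU ι) ^ (Multiplicative.toAdd (1 : Multiplicative (ZMod 2))).val = 1
    simp
  map_mul' a b := by
    show (tauU ι) ^ (Multiplicative.toAdd (a * b)).val
        = (tauU ι) ^ (Multiplicative.toAdd a).val * (tauU ι) ^ (Multiplicative.toAdd b).val
    have h2 : (tauU ι) ^ 2 = 1 := by rw [pow_two]; exact tauU_mul_tauU ι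
    have hab : (Multiplicative.toAdd (a * b))
        = Multiplicative.toAdd a + Multiplicative.toAdd b := rfl
    rw [hab, ZMod.val_add, ← pow_eq_pow_mod _ h2, pow_add]

/-- The group `G̃ = (U(ι)/⟨-I⟩) ⋊ ⟨τ⟩`. -/
abbrev GtA := SemidirectProduct (UmodNeg ι) (Multiplicative (ZMod 2)) (actU ι)

/-- The natural projection `U(ι)/⟨-I⟩ →* PU(ι)`. -/
def projUmodNeg : UmodNeg ι →* PU ι :=
  QuotientGroup.map (negUSG ι) (scalarSG ι) (MonoidHom.id _)
    (fun x hx => by simpa using negUSG_le_scalarSG ι hx)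

lemma projUmodNeg_tauU (x : UmodNeg ι) :
    projUmodNeg ι (tauU ι x) = tauPU ι (projUmodNeg ι x) := by
  induction x using QuotientGroup.induction_on with
  | H A => rfl

lemma projUmodNeg_tauU_pow (k : ℕ) (x : UmodNeg ι) :
    projUmodNeg ι (((tauU ι) ^ k) x) = ((tauPU ι) ^ k) (projUmodNeg ι x) := by
  induction k generalizing x with
  | zero => simp
  | succ k ih =>
    calc projUmodNeg ι (((tauU ι) ^ (k + 1)) x)
        = projUmodNeg ι (((tauU ι) ^ k) ((tauU ι) x)) := by rw [pow_succ, MulAut.mul_apply]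
      _ = ((tauPU ι) ^ k) (projUmodNeg ι ((tauU ι) x)) := ih _
      _ = ((tauPU ι) ^ k) ((tauPU ι) (projUmodNeg ι x)) := by rw [projUmodNeg_tauU]
      _ = ((tauPU ι) ^ (k + 1)) (projUmodNeg ι x) := by rw [pow_succ, MulAut.mul_apply]

lemma proj_compat : ∀ g : Multiplicative (ZMod 2),
    (projUmodNeg ι).comp ((actU ι g).toMonoidHom)
      = ((actPU ι g).toMonoidHom).comp (projUmodNeg ι) := by
  intro g
  ext x
  show projUmodNeg ι ((actU ι g) x) = (actPU ι g) (projUmodNeg ι x)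
  show projUmodNeg ι (((tauU ι) ^ (Multiplicative.toAdd g).val) x)
      = ((tauPU ι) ^ (Multiplicative.toAdd g).val) (projUmodNeg ι x)
  exact projUmodNeg_tauU_pow ι _ x

/-- The natural projection `π' : G̃ = (U(ι)/⟨-I⟩) ⋊ ⟨τ⟩ →* G = PU(ι) ⋊ ⟨τ₀⟩`. -/
def piT : GtA ι →* GA ι :=
  SemidirectProduct.map (projUmodNeg ι) (MonoidHom.id _) (proj_compat ι)

/-- The subgroup `Z_n/⟨-I⟩` of `U(ι)/⟨-I⟩`. -/
def ZmodNegSG : Subgroup (UmodNeg ι) :=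
  Subgroup.map (QuotientGroup.mk' (negUSG ι)) (scalarSG ι)

/-- `iI` as an element of the unitary group. -/
def iIU : UG ι := ⟨(Complex.I • 1 : Matrix ι ι ℂ), by
  rw [Matrix.mem_unitaryGroup_iff]
  have : star (Complex.I • (1 : Matrix ι ι ℂ))
      = (starRingEnd ℂ Complex.I) • (1 : Matrix ι ι ℂ) := by
    simp [Matrix.star_eq_conjTranspose, Matrix.conjTranspose_smul]
  rw [this, smul_mul_smul_comm, one_mul]
  simp [Complex.conj_I]⟩

end

open Subgroup SemidirectProduct
open scoped commutatorElement

section GroupTheory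

variable {G : Type*} [Group G]

lemma mem_zpowers_iff_of_mul_self_eq_one {g x : G} (hg : g * g = 1) :
    x ∈ zpowers g ↔ x = 1 ∨ x = g := by
  refine ⟨fun hx => ?_, by rintro (rfl | rfl) <;> simp [one_mem, mem_zpowers]⟩
  obtain ⟨k, rfl⟩ := mem_zpowers_iff.mp hx
  rw [zpow_eq_zpow_emod k (n := 2) (by rwa [zpow_two])]
  rcases Int.emod_two_eq_zero_or_one k with h | h <;> simp [h]

lemma commutatorElement_mul_mul_of_mem_center {x y c d : G} (hc : c ∈ center G)
    (hd : d ∈ center G) : ⁅x * c, y * d⁆ = ⁅x, y⁆ := by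
  rw [mem_center_iff] at hc hd
  calc ⁅x * c, y * d⁆ = x * (c * (y * d)) * c⁻¹ * x⁻¹ * d⁻¹ * y⁻¹ := by
        rw [commutatorElement_def]; group
    _ = x * y * (d * x⁻¹) * d⁻¹ * y⁻¹ := by rw [← hc (y * d)]; group
    _ = ⁅x, y⁆ := by rw [← hd x⁻¹, commutatorElement_def]; group

section Inversion

variable {M : Subgroup G} {t : G} (hinv : ∀ m ∈ M, t * m * t⁻¹ = m⁻¹)
include hinv

lemma mem_centralizer_singleton_iff_mul_self_eq_one {m : G} (hm : m ∈ M) :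
    m ∈ centralizer {t} ↔ m * m = 1 := by
  rw [mem_centralizer_singleton_iff, eq_comm, ← mul_inv_eq_iff_eq_mul, hinv m hm,
    mul_eq_one_iff_eq_inv, eq_comm]

variable (hsqrt : ∀ m ∈ M, ∃ z ∈ M, z * z = m)
include hsqrt

lemma exists_mem_mul_mul_inv_eq_mul {m : G} (hm : m ∈ M) : ∃ z ∈ M, z * t * z⁻¹ = m * t := by
  obtain ⟨z, hz, rfl⟩ := hsqrt m hm
  refine ⟨z, hz, ?_⟩
  calc z * t * z⁻¹ = z * (t * z⁻¹ * t⁻¹) * t := by group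
    _ = z * z * t := by rw [hinv z⁻¹ (inv_mem hz), inv_inv]

lemma exists_mem_commute_mul [M.Normal] {q : G} (hq : ⁅t, q⁆ ∈ M) :
    ∃ z ∈ M, Commute t (q * z) := by
  obtain ⟨z, hz, hzz⟩ := hsqrt _ (‹M.Normal›.conj_mem _ hq q⁻¹)
  refine ⟨z, hz, ?_⟩
  calc t * (q * z) = t * q * t⁻¹ * (t * z * t⁻¹) * t := by group
    _ = q * (q⁻¹ * ⁅t, q⁆ * q⁻¹⁻¹) * z⁻¹ * t := by
        rw [hinv z hz, commutatorElement_def]; group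
    _ = q * z * t := by rw [← hzz]; group

end Inversion

section Lifting

variable {H : Type*} [Group H] {f : G →* H} {F : Subgroup H} {t : G}

lemma eq_comap_inf_centralizer {A : Subgroup G} (hAt : A ≤ centralizer {t})
    (hmap : A.map f = F) (hker : centralizer {t} ⊓ f.ker ≤ A) :
    A = F.comap f ⊓ centralizer {t} := by
  refine le_antisymm (le_inf (hmap ▸ Subgroup.le_comap_map f A) hAt) ?_
  rintro p ⟨hpF, hpt⟩
  obtain ⟨q, hqA, hq⟩ : f p ∈ A.map f := hmap ▸ hpF
  have : p * q⁻¹ ∈ centralizer {t} ⊓ f.ker :=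
    mem_inf.mpr ⟨mul_mem hpt (inv_mem (hAt hqA)), by simp [hq]⟩
  simpa using mul_mem (hker this) hqA

lemma map_conj_comap_inf_centralizer {z : G} (hz : z ∈ f.ker) :
    (F.comap f ⊓ centralizer {t}).map (MulAut.conj z).toMonoidHom
      = F.comap f ⊓ centralizer {z * t * z⁻¹} := by
  ext p
  rw [mem_map_equiv]
  simp only [MulAut.conj_symm_apply, mem_inf, mem_comap, mem_centralizer_singleton_iff,
    map_mul, map_inv, MonoidHom.mem_ker.mp hz, inv_one, one_mul, mul_one]
  rw [show p * (z * t * z⁻¹) = z * (z⁻¹ * p * z * t) * z⁻¹ by group,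
    show z * t * z⁻¹ * p = z * (t * (z⁻¹ * p * z)) * z⁻¹ by group, mul_left_inj, mul_right_inj]

end Lifting

lemma SemidirectProduct.induction_mem_zmod_two {N : Type*} [Group N]
    {φ : Multiplicative (ZMod 2) →* MulAut N} {H : Subgroup (N ⋊[φ] Multiplicative (ZMod 2))}
    {t : N ⋊[φ] Multiplicative (ZMod 2)} (ht : t ∈ H) (htr : t.right ≠ 1)
    {P : N ⋊[φ] Multiplicative (ZMod 2) → Prop} (hinl : ∀ x, inl x ∈ H → P (inl x))
    (hmul : ∀ x, inl x ∈ H → P (inl x * t)) (p : N ⋊[φ] Multiplicative (ZMod 2)) (hp : p ∈ H) :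
    P p := by
  by_cases hpr : p.right = 1
  · have hpx : p = inl p.left := by ext <;> simp [hpr]
    exact hpx ▸ hinl _ (hpx ▸ hp)
  · have hpt : p.right = t.right :=
      (by decide : ∀ a b : Multiplicative (ZMod 2), a ≠ 1 → b ≠ 1 → a = b) _ _ hpr htr
    have hx : inl (p * t⁻¹).left = p * t⁻¹ := by ext <;> simp [hpt]
    have := hmul _ (hx ▸ mul_mem hp (inv_mem ht))
    rwa [hx, inv_mul_cancel_right] at this

end GroupTheory

section Scalars

variable {ι : Type} [Fintype ι] [DecidableEq ι]

lemma scalarSG_le_center : scalarSG ι ≤ center (UG ι) := by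
  rintro S ⟨c, -, hc⟩
  refine mem_center_iff.mpr fun B => Subtype.ext ?_
  rw [UnitaryGroup.mul_val, UnitaryGroup.mul_val, hc, smul_mul_assoc, mul_smul_comm, one_mul,
    mul_one]

lemma conjUGE_of_mem_scalarSG {S : UG ι} (hS : S ∈ scalarSG ι) : conjUGE S = S⁻¹ := by
  obtain ⟨c, -, hc⟩ := hS
  refine Subtype.ext ?_
  change (S : Matrix ι ι ℂ).map (starRingEnd ℂ) = star (S : Matrix ι ι ℂ)
  rw [hc]
  ext i j
  by_cases h : i = j
  · simp [h]
  · simp [h, Ne.symm h]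

lemma smul_one_mem_unitaryGroup {c : ℂ} (hc : ‖c‖ = 1) :
    c • (1 : Matrix ι ι ℂ) ∈ unitaryGroup ι ℂ := by
  rw [mem_unitaryGroup_iff, star_smul, star_one, smul_mul_smul_comm, one_mul, RCLike.star_def,
    Complex.mul_conj, Complex.normSq_eq_norm_sq, hc]
  simp

lemma exists_mul_self_eq_of_mem_scalarSG {S : UG ι} (hS : S ∈ scalarSG ι) :
    ∃ R ∈ scalarSG ι, R * R = S := by
  obtain ⟨c, hc, hSc⟩ := hS
  obtain ⟨d, rfl⟩ := IsAlgClosed.exists_eq_mul_self c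
  have hd : ‖d‖ = 1 := by
    rwa [norm_mul, ← sq, pow_eq_one_iff_of_nonneg (norm_nonneg d) two_ne_zero] at hc
  refine ⟨⟨d • 1, smul_one_mem_unitaryGroup hd⟩, ⟨d, hd, rfl⟩, Subtype.ext ?_⟩
  rw [UnitaryGroup.mul_val, hSc, smul_mul_smul_comm, one_mul]

lemma mem_negUSG_of_mul_self_eq_one [Nonempty ι] {S : UG ι} (hS : S ∈ scalarSG ι)
    (h : S * S = 1) : S ∈ negUSG ι := by
  obtain ⟨c, -, hSc⟩ := hS
  obtain ⟨i⟩ := ‹Nonempty ι›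
  have hcc : c * c = 1 := by
    simpa [hSc, smul_mul_smul_comm] using congrFun₂ (congrArg Subtype.val h) i i
  rcases mul_self_eq_one_iff.mp hcc with rfl | rfl
  · rw [show S = 1 from Subtype.ext (by simpa using hSc)]
    exact one_mem _
  · rw [show S = negOneU ι from Subtype.ext (by rw [hSc, neg_one_smul]; rfl)]
    exact mem_zpowers _

lemma iIU_mem_scalarSG : iIU ι ∈ scalarSG ι := ⟨Complex.I, by simp, rfl⟩

lemma iIU_mul_self : iIU ι * iIU ι = negOneU ι := by
  refine Subtype.ext ?_
  change (Complex.I • 1 : Matrix ι ι ℂ) * (Complex.I • 1) = -1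
  rw [smul_mul_smul_comm, one_mul, Complex.I_mul_I, neg_one_smul]

lemma negOneU_mul_self : negOneU ι * negOneU ι = 1 :=
  Subtype.ext (by change (-1 : Matrix ι ι ℂ) * -1 = 1; simp)

end Scalars

section Quotient

variable {ι : Type} [Fintype ι] [DecidableEq ι]

lemma mk_mem_ZmodNegSG_iff {A : UG ι} : (A : UmodNeg ι) ∈ ZmodNegSG ι ↔ A ∈ scalarSG ι := by
  have h := comap_map_eq (QuotientGroup.mk' (negUSG ι)) (scalarSG ι)
  rw [QuotientGroup.ker_mk', sup_eq_left.mpr (negUSG_le_scalarSG ι)] at h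
  exact SetLike.ext_iff.mp h A

lemma ZmodNegSG_le_center : ZmodNegSG ι ≤ center (UmodNeg ι) := by
  rintro _ ⟨S, hS, rfl⟩
  refine mem_center_iff.mpr fun b => ?_
  obtain ⟨B, rfl⟩ := QuotientGroup.mk_surjective b
  exact congrArg _ (mem_center_iff.mp (scalarSG_le_center hS) B)

lemma tauU_of_mem_ZmodNegSG {k : UmodNeg ι} (hk : k ∈ ZmodNegSG ι) : tauU ι k = k⁻¹ := by
  obtain ⟨S, hS, rfl⟩ := hk
  exact congrArg _ (conjUGE_of_mem_scalarSG hS)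

lemma exists_mul_self_eq_of_mem_ZmodNegSG {k : UmodNeg ι} (hk : k ∈ ZmodNegSG ι) :
    ∃ z ∈ ZmodNegSG ι, z * z = k := by
  obtain ⟨S, hS, rfl⟩ := hk
  obtain ⟨R, hR, rfl⟩ := exists_mul_self_eq_of_mem_scalarSG hS
  exact ⟨R, ⟨R, hR, rfl⟩, rfl⟩

lemma mem_zpowers_mk_iIU_iff [Nonempty ι] {k : UmodNeg ι} :
    k ∈ zpowers (iIU ι : UmodNeg ι) ↔ k ∈ ZmodNegSG ι ∧ k * k = 1 := by
  have hi : (iIU ι : UmodNeg ι) * iIU ι = 1 := by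
    rw [← QuotientGroup.mk_mul, iIU_mul_self, QuotientGroup.eq_one_iff]
    exact mem_zpowers _
  constructor
  · rintro ⟨m, rfl⟩
    exact ⟨zpow_mem (mk_mem_ZmodNegSG_iff.mpr iIU_mem_scalarSG) m,
      by rw [← (Commute.refl _).mul_zpow, hi, _root_.one_zpow]⟩
  · obtain ⟨S, rfl⟩ := QuotientGroup.mk_surjective k
    rintro ⟨hS, hSS⟩
    rw [mk_mem_ZmodNegSG_iff] at hS
    rw [← QuotientGroup.mk_mul, QuotientGroup.eq_one_iff, negUSG,
      mem_zpowers_iff_of_mul_self_eq_one negOneU_mul_self] at hSS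
    rcases hSS with hSS | hSS
    · rw [(QuotientGroup.eq_one_iff S).mpr (mem_negUSG_of_mul_self_eq_one hS hSS)]
      exact one_mem _
    · -- `S` and `iI` have the same square `-I`, so they differ by a sign
      have hcomm : Commute (iIU ι)⁻¹ S :=
        (mem_center_iff.mp (scalarSG_le_center (inv_mem iIU_mem_scalarSG)) S).symm
      have hR : S * (iIU ι)⁻¹ ∈ negUSG ι := by
        refine mem_negUSG_of_mul_self_eq_one (mul_mem hS (inv_mem iIU_mem_scalarSG)) ?_
        rw [hcomm.mul_mul_mul_comm, ← _root_.mul_inv_rev, hSS, iIU_mul_self, mul_inv_cancel]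
      rw [← inv_mul_cancel_right S (iIU ι), QuotientGroup.mk_mul,
        (QuotientGroup.eq_one_iff _).mpr hR, one_mul]
      exact mem_zpowers _

lemma commute_of_twisted_fixed [Nonempty ι] {a x y : UmodNeg ι}
    (hx : a * tauU ι x * a⁻¹ = x) (hy : a * tauU ι y * a⁻¹ = y)
    (hxy : ⁅x, y⁆ ∈ ZmodNegSG ι) : Commute x y := by
  obtain ⟨A, rfl⟩ := QuotientGroup.mk_surjective a
  obtain ⟨X, rfl⟩ := QuotientGroup.mk_surjective x
  obtain ⟨Y, rfl⟩ := QuotientGroup.mk_surjective y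
  let ψ : UG ι ≃* UG ι := conjUGE.trans (MulAut.conj A)
  have hfix : ∀ Z : UG ι, (A : UmodNeg ι) * tauU ι Z * (A : UmodNeg ι)⁻¹ = Z →
      ∃ e ∈ center (UG ι), ψ Z = Z * e := fun Z hZ =>
    ⟨Z⁻¹ * ψ Z, scalarSG_le_center (negUSG_le_scalarSG ι (QuotientGroup.eq.mp hZ.symm)),
      (mul_inv_cancel_left Z _).symm⟩
  obtain ⟨e₁, he₁, hX⟩ := hfix X hx
  obtain ⟨e₂, he₂, hY⟩ := hfix Y hy
  have hS : ⁅X, Y⁆ ∈ scalarSG ι := by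
    rwa [← mk_mem_ZmodNegSG_iff, ← QuotientGroup.mk'_apply, map_commutatorElement]
  have hψS : ψ ⁅X, Y⁆ = ⁅X, Y⁆⁻¹ := by
    change A * conjUGE ⁅X, Y⁆ * A⁻¹ = _
    rw [conjUGE_of_mem_scalarSG hS,
      mem_center_iff.mp (scalarSG_le_center (inv_mem hS)) A, mul_inv_cancel_right]
  have hψS' : ψ ⁅X, Y⁆ = ⁅X, Y⁆ := by
    rw [map_commutatorElement, hX, hY, commutatorElement_mul_mul_of_mem_center he₁ he₂]
  have hE : ⁅X, Y⁆ ∈ negUSG ι :=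
    mem_negUSG_of_mul_self_eq_one hS (by rw [mul_eq_one_iff_eq_inv, ← hψS, hψS'])
  rw [← commutatorElement_eq_one_iff_commute, ← QuotientGroup.mk'_apply, ← QuotientGroup.mk'_apply,
    ← map_commutatorElement, QuotientGroup.mk'_apply]
  exact (QuotientGroup.eq_one_iff _).mpr hE

lemma ker_projUmodNeg : (projUmodNeg ι).ker = ZmodNegSG ι := by
  ext x
  obtain ⟨A, rfl⟩ := QuotientGroup.mk_surjective x
  rw [MonoidHom.mem_ker, mk_mem_ZmodNegSG_iff]
  exact QuotientGroup.eq_one_iff A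

end Quotient

lemma SemidirectProduct.mul_inl_mul_inv {N G : Type*} [Group N] [Group G]
    {φ : G →* MulAut N} (t : N ⋊[φ] G) (x : N) :
    t * inl x * t⁻¹ = inl (t.left * φ t.right x * t.left⁻¹) := by
  ext <;> simp

section Projection

variable {ι : Type} [Fintype ι] [DecidableEq ι]

lemma actU_of_ne_one {g : Multiplicative (ZMod 2)} (hg : g ≠ 1) : actU ι g = tauU ι := by
  have h : (Multiplicative.toAdd g).val = 1 := by revert g; decide
  change tauU ι ^ (Multiplicative.toAdd g).val = tauU ι
  rw [h, pow_one]

lemma piT_right (p : GtA ι) : (piT ι p).right = p.right := rfl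

lemma piT_surjective : Function.Surjective (piT ι) := by
  rintro ⟨x, g⟩
  obtain ⟨A, rfl⟩ := QuotientGroup.mk_surjective x
  exact ⟨⟨A, g⟩, rfl⟩

lemma ker_piT : (piT ι).ker = Subgroup.map inl (ZmodNegSG ι) := by
  ext p
  rw [MonoidHom.mem_ker, ← ker_projUmodNeg]
  constructor
  · intro hp
    have hr : p.right = 1 := congrArg SemidirectProduct.right hp
    exact ⟨p.left, congrArg SemidirectProduct.left hp, by ext <;> simp [hr]⟩
  · rintro ⟨x, hx, rfl⟩
    ext
    exacts [hx, rfl]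

lemma exists_mul_self_eq_of_mem_ker_piT : ∀ m ∈ (piT ι).ker, ∃ z ∈ (piT ι).ker, z * z = m := by
  rw [ker_piT]
  rintro _ ⟨k, hk, rfl⟩
  obtain ⟨z, hz, rfl⟩ := exists_mul_self_eq_of_mem_ZmodNegSG hk
  exact ⟨inl z, mem_map_of_mem _ hz, (map_mul _ _ _).symm⟩

variable {t : GtA ι} (ht : t.right ≠ 1)
include ht

lemma mul_inl_mul_inv_of_right_ne_one (x : UmodNeg ι) :
    t * inl x * t⁻¹ = inl (t.left * tauU ι x * t.left⁻¹) := by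
  rw [mul_inl_mul_inv, actU_of_ne_one ht]

lemma mul_mul_inv_of_mem_ker_piT : ∀ m ∈ (piT ι).ker, t * m * t⁻¹ = m⁻¹ := by
  rw [ker_piT]
  rintro _ ⟨k, hk, rfl⟩
  rw [mul_inl_mul_inv_of_right_ne_one ht, tauU_of_mem_ZmodNegSG hk,
    mem_center_iff.mp (ZmodNegSG_le_center (inv_mem hk)), mul_inv_cancel_right, map_inv]

lemma centralizer_inf_ker_piT [Nonempty ι] :
    centralizer {t} ⊓ (piT ι).ker = zpowers (inl (iIU ι : UmodNeg ι)) := by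
  have hc : ∀ {m}, m ∈ (piT ι).ker → (m ∈ centralizer {t} ↔ m * m = 1) :=
    mem_centralizer_singleton_iff_mul_self_eq_one (mul_mul_inv_of_mem_ker_piT ht)
  rw [← MonoidHom.map_zpowers]
  ext m
  constructor
  · rintro ⟨hmt, hm⟩
    have hmm := (hc hm).mp hmt
    rw [ker_piT] at hm
    obtain ⟨k, hk, rfl⟩ := hm
    exact mem_map_of_mem _
      (mem_zpowers_mk_iIU_iff.mpr ⟨hk, inl_injective (by rwa [map_mul, map_one])⟩)
  · rintro ⟨k, hk, rfl⟩
    obtain ⟨hk, hkk⟩ := mem_zpowers_mk_iIU_iff.mp hk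
    have hm : inl k ∈ (piT ι).ker := ker_piT (ι := ι) ▸ mem_map_of_mem _ hk
    refine mem_inf.mpr ⟨(hc hm).mpr ?_, hm⟩
    rw [← map_mul, hkk, map_one]

variable {F : Subgroup (GA ι)} (habel : ∀ x ∈ F, ∀ y ∈ F, x * y = y * x) (htF : piT ι t ∈ F)
include habel htF

lemma commute_of_mem_comap_inf_centralizer [Nonempty ι] :
    ∀ p ∈ F.comap (piT ι) ⊓ centralizer {t}, ∀ q ∈ F.comap (piT ι) ⊓ centralizer {t},
      p * q = q * p := by
  set H := F.comap (piT ι) ⊓ centralizer {t}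
  have htH : t ∈ H := mem_inf.mpr ⟨htF, mem_centralizer_singleton_iff.mpr rfl⟩
  have hcomm : ∀ p ∈ H, Commute p t := fun p hp =>
    mem_centralizer_singleton_iff.mp (mem_inf.mp hp).2
  have hfix : ∀ z, inl z ∈ H → t.left * tauU ι z * t.left⁻¹ = z := fun z hz =>
    inl_injective (by rw [← mul_inl_mul_inv_of_right_ne_one ht,
      mul_inv_eq_of_eq_mul (hcomm _ hz).eq.symm])
  have hinl : ∀ x y : UmodNeg ι, inl x ∈ H → inl y ∈ H → Commute (inl x : GtA ι) (inl y) := by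
    intro x y hx hy
    have hxy : ⁅(inl x : GtA ι), inl y⁆ ∈ (piT ι).ker := by
      rw [MonoidHom.mem_ker, map_commutatorElement, commutatorElement_eq_one_iff_mul_comm]
      exact habel _ (mem_inf.mp hx).1 _ (mem_inf.mp hy).1
    rw [← map_commutatorElement (inl : UmodNeg ι →* GtA ι), ker_piT,
      mem_map_iff_mem inl_injective] at hxy
    exact (commute_of_twisted_fixed (hfix x hx) (hfix y hy) hxy).map inl
  have hinl' : ∀ x : UmodNeg ι, inl x ∈ H → ∀ q ∈ H, Commute (inl x : GtA ι) q := fun x hx =>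
    induction_mem_zmod_two htH ht (hinl x · hx) fun y hy => (hinl x y hx hy).mul_right (hcomm _ hx)
  intro p hp q hq
  exact (induction_mem_zmod_two htH ht (P := (Commute · q)) (fun x hx => hinl' x hx q hq)
    (fun x hx => (hinl' x hx q hq).mul_left (hcomm q hq).symm) p hp).eq

lemma map_comap_inf_centralizer : (F.comap (piT ι) ⊓ centralizer {t}).map (piT ι) = F := by
  refine le_antisymm (map_le_iff_le_comap.mpr inf_le_left) fun g hg => ?_
  obtain ⟨q, rfl⟩ := piT_surjective g
  have hq : ⁅t, q⁆ ∈ (piT ι).ker := by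
    rw [MonoidHom.mem_ker, map_commutatorElement, commutatorElement_eq_one_iff_mul_comm]
    exact habel _ htF _ hg
  obtain ⟨z, hz, htz⟩ :=
    exists_mem_commute_mul (mul_mul_inv_of_mem_ker_piT ht) exists_mul_self_eq_of_mem_ker_piT hq
  have hπ : piT ι (q * z) = piT ι q := by rw [map_mul, MonoidHom.mem_ker.mp hz, mul_one]
  refine ⟨q * z, mem_inf.mpr ⟨mem_comap.mpr (hπ ▸ hg), ?_⟩, hπ⟩
  exact mem_centralizer_singleton_iff.mpr htz.eq.symm

end Projection

/-- For an abelian subgroup `F` of `G = PU(n) ⋊ ⟨τ₀⟩` not contained in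
`PU(n)`, there is an abelian subgroup `F'` of `G̃ = (U(n)/⟨-I⟩) ⋊ ⟨τ⟩` with `π'(F') = F` and
`F' ∩ (Z_n/⟨-I⟩) = ⟨[iI]⟩`; moreover `F'` is determined by `F` up to conjugation by an
element of `Z_n/⟨-I⟩`.  (The kernel of `π'` is `Z_n/⟨-I⟩`.) -/
theorem twisted_lifting (n : ℕ) (hn : 1 ≤ n)
    (F : Subgroup (GA (Fin n)))
    (habel : ∀ x ∈ F, ∀ y ∈ F, x * y = y * x)
    (hout : ∃ u ∈ F, u.right ≠ 1) :
    (piT (Fin n)).ker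
        = Subgroup.map SemidirectProduct.inl (ZmodNegSG (Fin n)) ∧
    ∃ F' : Subgroup (GtA (Fin n)),
      (∀ x ∈ F', ∀ y ∈ F', x * y = y * x) ∧
      Subgroup.map (piT (Fin n)) F' = F ∧
      F' ⊓ Subgroup.map SemidirectProduct.inl (ZmodNegSG (Fin n))
        = Subgroup.zpowers
            (SemidirectProduct.inl (QuotientGroup.mk (iIU (Fin n)) : UmodNeg (Fin n))) ∧
      ∀ F'' : Subgroup (GtA (Fin n)),
        (∀ x ∈ F'', ∀ y ∈ F'', x * y = y * x) →
        Subgroup.map (piT (Fin n)) F'' = F →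
        F'' ⊓ Subgroup.map SemidirectProduct.inl (ZmodNegSG (Fin n))
          = Subgroup.zpowers
              (SemidirectProduct.inl (QuotientGroup.mk (iIU (Fin n)) : UmodNeg (Fin n))) →
        ∃ z ∈ Subgroup.map SemidirectProduct.inl (ZmodNegSG (Fin n)),
          Subgroup.map (MulAut.conj z).toMonoidHom F' = F'' := by
  have : Nonempty (Fin n) := ⟨⟨0, hn⟩⟩
  obtain ⟨u, huF, hu⟩ := hout
  obtain ⟨t, rfl⟩ := piT_surjective u
  rw [← ker_piT]
  refine ⟨rfl, F.comap (piT _) ⊓ centralizer {t}, commute_of_mem_comap_inf_centralizer hu habel huF,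
    map_comap_inf_centralizer hu habel huF, ?_, ?_⟩
  · rw [inf_right_comm, inf_eq_right.mpr (MonoidHom.ker_le_comap _ F), inf_comm,
      centralizer_inf_ker_piT hu]
  intro F'' habel'' hmap'' hint''
  obtain ⟨t'', ht''F'', hπ⟩ : piT _ t ∈ F''.map (piT _) := hmap''.symm ▸ huF
  have ht'' : t''.right ≠ 1 := by rwa [← piT_right, hπ]
  have htt'' : t'' * t⁻¹ ∈ (piT _).ker := by
    rw [MonoidHom.mem_ker, map_mul, map_inv, hπ, mul_inv_cancel]
  obtain ⟨z, hz, hzt⟩ := exists_mem_mul_mul_inv_eq_mul (mul_mul_inv_of_mem_ker_piT hu)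
    exists_mul_self_eq_of_mem_ker_piT htt''
  rw [inv_mul_cancel_right] at hzt
  refine ⟨z, hz, ?_⟩
  rw [map_conj_comap_inf_centralizer hz, hzt]
  refine (eq_comap_inf_centralizer (fun p hp => mem_centralizer_singleton_iff.mpr
    (habel'' _ hp _ ht''F'')) hmap'' ?_).symm
  rw [centralizer_inf_ker_piT ht'', ← hint'']
  exact inf_le_left
end

section
/- Let k ≥ 1 and consider tuples (V, m, μ₁, μ₂) where V is a 2k-dimensional 𝔽₂-vector space, m is a nondegenerate alternating bilinear form on V, and μ₁, μ₂ are quadratic refinements of m such that both (V, m, μ₁) and (V, m, μ₂) are of plus type. Then there are exactly two isomorphism classes of such tuples: two tuples (V, m, μ₁, μ₂) and (V', m', μ₁', μ₂') are isomorphic if and only if (μ₁ = μ₂ ⟺ μ₁' = μ₂'); moreover tuples with μ₁ = μ₂ and tuples with μ₁ ≠ μ₂ both exist. -/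
/-!
A plus-type basis for `μ₁` identifies `(V, m, μ₁)` with the model `𝔽₂^k × 𝔽₂^k` carrying
`m₀(x, y) = ∑ (xᵢ y'ᵢ + x'ᵢ yᵢ)` and `q₀(x) = ∑ xᵢ x'ᵢ`. Since `μ₁ + μ₂` is additive,
`μ₂` becomes `q₀ + m₀(v, ·)` for some `v`, with `v = 0` exactly when `μ₁ = μ₂`. The character sum
`∑ₓ (-1)^μ(x)` equals `2^k` for every plus-type `μ`, while for `q₀ + m₀(v, ·)` it equals
`(-1)^q₀(v) 2^k`; hence `v` is singular. The isometries of `q₀` act transitively on nonzero singular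
vectors (a product of at most two transvections `x ↦ x + m₀(x, u) u` with `q₀(u) = 1`), and an
isometry sending `v` to `w` carries `(q₀, q₀ + m₀(v, ·))` to `(q₀, q₀ + m₀(w, ·))`. So there are at
most two classes, and `(q₀, q₀)`, `(q₀, q₀ + m₀(e₁, ·))` realise both: the latter is `q₀` composed
with the transvection along the singular vector `e₁`, hence of plus type.
-/

noncomputable section

/-- `m` is a nondegenerate alternating bilinear form on the `𝔽₂`-vector space `V`. -/
def IsAltNondeg {V : Type} [AddCommGroup V] [Module (ZMod 2) V]
    (m : V → V → ZMod 2) : Prop :=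
  (∀ x y z, m (x + y) z = m x z + m y z) ∧
  (∀ x y z, m x (y + z) = m x y + m x z) ∧
  (∀ x, m x x = 0) ∧
  (∀ x, (∀ y, m x y = 0) → x = 0)

/-- `μ` is a quadratic refinement of `m`: `m(x,y) = μ(x) + μ(y) + μ(x+y)`. -/
def IsQuadRef {V : Type} [AddCommGroup V] [Module (ZMod 2) V]
    (m : V → V → ZMod 2) (μ : V → ZMod 2) : Prop :=
  ∀ x y, m x y = μ x + μ y + μ (x + y)

/-- `(V, m, μ)` is of plus type (the space `V_{0,k;0,0}`): there is a basis
`e₁, f₁, …, e_k, f_k` with `m(eᵢ,fⱼ) = δᵢⱼ`, `m(eᵢ,eⱼ) = m(fᵢ,fⱼ) = 0` and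
`μ(eᵢ) = μ(fᵢ) = 0`. -/
def IsPlusType {V : Type} [AddCommGroup V] [Module (ZMod 2) V] (k : ℕ)
    (m : V → V → ZMod 2) (μ : V → ZMod 2) : Prop :=
  ∃ B : Module.Basis (Fin k ⊕ Fin k) (ZMod 2) V,
    (∀ i j, m (B (Sum.inl i)) (B (Sum.inr j)) = if i = j then 1 else 0) ∧
    (∀ i j, m (B (Sum.inl i)) (B (Sum.inl j)) = 0) ∧
    (∀ i j, m (B (Sum.inr i)) (B (Sum.inr j)) = 0) ∧
    (∀ i, μ (B (Sum.inl i)) = 0) ∧ (∀ i, μ (B (Sum.inr i)) = 0)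

/-- Isomorphism of tuples `(V, m, μ₁, …, μ_s)`: a linear isomorphism preserving the
bilinear form and matching the quadratic refinements up to a permutation. -/
def TupleIso {s : ℕ} {V V' : Type} [AddCommGroup V] [Module (ZMod 2) V]
    [AddCommGroup V'] [Module (ZMod 2) V']
    (m : V → V → ZMod 2) (μs : Fin s → V → ZMod 2)
    (m' : V' → V' → ZMod 2) (μs' : Fin s → V' → ZMod 2) : Prop :=
  ∃ (f : V ≃ₗ[ZMod 2] V') (σ : Equiv.Perm (Fin s)),
    (∀ x y, m' (f x) (f y) = m x y) ∧ ∀ i x, μs' (σ i) (f x) = μs i x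

lemma ZMod.eq_zero_or_eq_one (c : ZMod 2) : c = 0 ∨ c = 1 := by
  revert c; decide

section General

variable {V V' : Type} [AddCommGroup V] [Module (ZMod 2) V] [AddCommGroup V']
  [Module (ZMod 2) V'] {m : V → V → ZMod 2} {m' : V' → V' → ZMod 2}

lemma additive_eq_zero_of_basis {ι : Type} (B : Module.Basis ι (ZMod 2) V) {δ : V → ZMod 2}
    (hδ : ∀ x y, δ (x + y) = δ x + δ y) (hB : ∀ i, δ (B i) = 0) (x : V) : δ x = 0 := by
  let L : V →ₗ[ZMod 2] ZMod 2 := (AddMonoidHom.mk' δ hδ).toZModLinearMap 2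
  exact LinearMap.congr_fun (B.ext (f₁ := L) (f₂ := 0) hB) x

lemma biadditive_ext_basis {ι : Type} (B : Module.Basis ι (ZMod 2) V) {n : V → V → ZMod 2}
    (hm₁ : ∀ x y z, m (x + y) z = m x z + m y z) (hm₂ : ∀ x y z, m x (y + z) = m x y + m x z)
    (hn₁ : ∀ x y z, n (x + y) z = n x z + n y z) (hn₂ : ∀ x y z, n x (y + z) = n x y + n x z)
    (hB : ∀ i j, m (B i) (B j) = n (B i) (B j)) (x y : V) : m x y = n x y := by
  have hBy : ∀ i y, m (B i) y = n (B i) y := fun i y => by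
    have := additive_eq_zero_of_basis B (δ := fun y => m (B i) y + n (B i) y)
      (fun y z => by grind) (fun j => by grind) y
    grind
  have := additive_eq_zero_of_basis B (δ := fun x => m x y + n x y)
    (fun x z => by grind) (fun i => by grind) x
  grind

lemma IsAltNondeg.comm (hm : IsAltNondeg m) (x y : V) : m x y = m y x := by
  have h := hm.2.2.1 (x + y)
  rw [hm.1, hm.2.1, hm.2.1, hm.2.2.1, hm.2.2.1] at h
  grind

lemma IsQuadRef.apply_add {μ : V → ZMod 2} (hμ : IsQuadRef m μ) (x y : V) :
    μ (x + y) = μ x + μ y + m x y := by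
  grind [hμ x y]

lemma IsQuadRef.ext_basis {ι : Type} (B : Module.Basis ι (ZMod 2) V) {μ ν : V → ZMod 2}
    (hμ : IsQuadRef m μ) (hν : IsQuadRef m ν) (hB : ∀ i, μ (B i) = ν (B i)) : μ = ν := by
  funext x
  have := additive_eq_zero_of_basis B (δ := fun x => μ x + ν x)
    (fun x y => by grind [hμ.apply_add x y, hν.apply_add x y]) (fun i => by grind) x
  grind

lemma IsQuadRef.comp {F : Type} [FunLike F V V'] [AddHomClass F V V'] {μ' : V' → ZMod 2}
    (hμ' : IsQuadRef m' μ') (f : F) (hf : ∀ x y, m' (f x) (f y) = m x y) :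
    IsQuadRef m (fun x => μ' (f x)) := fun x y => by
  simp only [← hf, hμ' (f x) (f y), map_add]

lemma IsAltNondeg.of_equiv (hm' : IsAltNondeg m') (f : V ≃ₗ[ZMod 2] V')
    (hf : ∀ x y, m' (f x) (f y) = m x y) : IsAltNondeg m := by
  refine ⟨fun x y z => ?_, fun x y z => ?_, fun x => ?_, fun x hx => ?_⟩
  · simp only [← hf, map_add, hm'.1]
  · simp only [← hf, map_add, hm'.2.1]
  · rw [← hf, hm'.2.2.1]
  · refine f.map_eq_zero_iff.mp (hm'.2.2.2 _ fun y => ?_)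
    rw [← f.apply_symm_apply y, hf, hx]

lemma IsPlusType.map {k : ℕ} {μ : V → ZMod 2} {μ' : V' → ZMod 2} (h : IsPlusType k m μ)
    (f : V ≃ₗ[ZMod 2] V') (hf : ∀ x y, m' (f x) (f y) = m x y) (hμ : ∀ x, μ' (f x) = μ x) :
    IsPlusType k m' μ' := by
  obtain ⟨B, h₁, h₂, h₃, h₄, h₅⟩ := h
  exact ⟨B.map f, by simpa [hf, hμ] using h₁, by simpa [hf, hμ] using h₂,
    by simpa [hf, hμ] using h₃, by simpa [hf, hμ] using h₄, by simpa [hf, hμ] using h₅⟩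

end General

section TupleIso

variable {s : ℕ} {V V' V'' : Type} [AddCommGroup V] [Module (ZMod 2) V] [AddCommGroup V']
  [Module (ZMod 2) V'] [AddCommGroup V''] [Module (ZMod 2) V'']
  {m : V → V → ZMod 2} {m' : V' → V' → ZMod 2} {m'' : V'' → V'' → ZMod 2}

lemma TupleIso.symm {μs : Fin s → V → ZMod 2} {μs' : Fin s → V' → ZMod 2}
    (h : TupleIso m μs m' μs') : TupleIso m' μs' m μs := by
  obtain ⟨f, σ, hm, hμ⟩ := h
  refine ⟨f.symm, σ.symm, fun x y => ?_, fun i x => ?_⟩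
  · rw [← hm, f.apply_symm_apply, f.apply_symm_apply]
  · rw [← hμ, σ.apply_symm_apply, f.apply_symm_apply]

lemma TupleIso.trans {μs : Fin s → V → ZMod 2} {μs' : Fin s → V' → ZMod 2}
    {μs'' : Fin s → V'' → ZMod 2} (h : TupleIso m μs m' μs') (h' : TupleIso m' μs' m'' μs'') :
    TupleIso m μs m'' μs'' := by
  obtain ⟨f, σ, hm, hμ⟩ := h
  obtain ⟨f', σ', hm', hμ'⟩ := h'
  exact ⟨f.trans f', σ.trans σ', fun x y => (hm' _ _).trans (hm x y),
    fun i x => (hμ' _ _).trans (hμ i x)⟩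

lemma TupleIso.eq_iff_eq {μ₁ μ₂ : V → ZMod 2} {μ₁' μ₂' : V' → ZMod 2}
    (h : TupleIso m ![μ₁, μ₂] m' ![μ₁', μ₂']) : μ₁ = μ₂ ↔ μ₁' = μ₂' := by
  obtain ⟨f, σ, -, hμ⟩ := h
  have hcomp : ∀ i, ![μ₁', μ₂'] (σ i) ∘ f = ![μ₁, μ₂] i := fun i => funext (hμ i)
  have hσ : σ 0 ≠ σ 1 := σ.injective.ne (by decide)
  calc μ₁ = μ₂ ↔ ![μ₁', μ₂'] (σ 0) ∘ f = ![μ₁', μ₂'] (σ 1) ∘ f := by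
        rw [hcomp, hcomp]; rfl
    _ ↔ ![μ₁', μ₂'] (σ 0) = ![μ₁', μ₂'] (σ 1) := f.surjective.injective_comp_right.eq_iff
    _ ↔ μ₁' = μ₂' := by
        generalize σ 0 = a, σ 1 = b at hσ
        fin_cases a <;> fin_cases b <;> simp_all [eq_comm]

end TupleIso

namespace PlusModel

open Finset

/-- `Pi.single (.inl i) 1` and `Pi.single (.inr i) 1` are the vectors `eᵢ`, `fᵢ` of a plus-type
basis. -/
abbrev W (k : ℕ) := Fin k ⊕ Fin k → ZMod 2

variable {k : ℕ}

def m₀ (k : ℕ) (x y : W k) : ZMod 2 := ∑ i, (x (.inl i) * y (.inr i) + x (.inr i) * y (.inl i))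

def q₀ (k : ℕ) (x : W k) : ZMod 2 := ∑ i, x (.inl i) * x (.inr i)

lemma m₀_add_left (x y z : W k) : m₀ k (x + y) z = m₀ k x z + m₀ k y z := by
  simp only [m₀, Pi.add_apply, ← sum_add_distrib]
  exact sum_congr rfl fun i _ => by ring

lemma m₀_add_right (x y z : W k) : m₀ k x (y + z) = m₀ k x y + m₀ k x z := by
  simp only [m₀, Pi.add_apply, ← sum_add_distrib]
  exact sum_congr rfl fun i _ => by ring

lemma m₀_smul_left (c : ZMod 2) (x y : W k) : m₀ k (c • x) y = c * m₀ k x y := by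
  simp only [m₀, Pi.smul_apply, smul_eq_mul, mul_sum]
  exact sum_congr rfl fun i _ => by ring

lemma m₀_comm (x y : W k) : m₀ k x y = m₀ k y x :=
  sum_congr rfl fun i _ => by ring

lemma m₀_smul_right (c : ZMod 2) (x y : W k) : m₀ k x (c • y) = c * m₀ k x y := by
  rw [m₀_comm, m₀_smul_left, m₀_comm]

lemma m₀_self (x : W k) : m₀ k x x = 0 :=
  sum_eq_zero fun i _ => by grind

lemma m₀_single_inl (x : W k) (j : Fin k) : m₀ k x (Pi.single (.inl j) 1) = x (.inr j) := by
  simp [m₀, Pi.single_apply]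

lemma m₀_single_inr (x : W k) (j : Fin k) : m₀ k x (Pi.single (.inr j) 1) = x (.inl j) := by
  simp [m₀, Pi.single_apply]

lemma isAltNondeg_m₀ : IsAltNondeg (m₀ k) := by
  refine ⟨m₀_add_left, m₀_add_right, m₀_self, fun x hx => funext fun j => ?_⟩
  cases j with
  | inl j => simpa [m₀_single_inr] using hx (Pi.single (.inr j) 1)
  | inr j => simpa [m₀_single_inl] using hx (Pi.single (.inl j) 1)

lemma isQuadRef_q₀ : IsQuadRef (m₀ k) (q₀ k) := fun x y => by
  simp only [m₀, q₀, Pi.add_apply, ← sum_add_distrib]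
  exact sum_congr rfl fun i _ => by grind

lemma q₀_single (j : Fin k ⊕ Fin k) : q₀ k (Pi.single j 1) = 0 := by
  cases j <;> simp [q₀, Pi.single_apply]

lemma isPlusType_q₀ : IsPlusType k (m₀ k) (q₀ k) := by
  refine ⟨Pi.basisFun _ _, fun i j => ?_, fun i j => ?_, fun i j => ?_, fun i => ?_,
    fun i => ?_⟩ <;> simp [m₀_single_inl, m₀_single_inr, q₀_single, Pi.single_apply, eq_comm]

lemma _root_.IsPlusType.exists_equiv_model {V : Type} [AddCommGroup V] [Module (ZMod 2) V]
    {m : V → V → ZMod 2} {μ : V → ZMod 2} (hm : IsAltNondeg m) (hμ : IsQuadRef m μ)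
    (h : IsPlusType k m μ) :
    ∃ f : V ≃ₗ[ZMod 2] W k, (∀ x y, m₀ k (f x) (f y) = m x y) ∧ ∀ x, q₀ k (f x) = μ x := by
  obtain ⟨B, h₁, h₂, h₃, h₄, h₅⟩ := h
  have hB : ∀ j, B.equivFun (B j) = Pi.single j 1 := fun j => by
    ext l; simp [Pi.single_apply, eq_comm]
  have hf : ∀ x y, m₀ k (B.equivFun x) (B.equivFun y) = m x y := by
    refine biadditive_ext_basis B (by simp [m₀_add_left]) (by simp [m₀_add_right]) hm.1 hm.2.1
      fun i j => ?_
    rcases i with i | i <;> rcases j with j | j <;>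
      simp [hB, m₀_single_inl, m₀_single_inr, Pi.single_apply, h₁, h₂, h₃, hm.comm (B (.inr i)),
        eq_comm]
  refine ⟨B.equivFun, hf, congrFun ((isQuadRef_q₀.comp B.equivFun hf).ext_basis B hμ ?_)⟩
  rintro (i | i) <;> simp [hB, q₀_single, h₄, h₅]

def twist (v : W k) (x : W k) : ZMod 2 := q₀ k x + m₀ k v x

lemma isQuadRef_twist (v : W k) : IsQuadRef (m₀ k) (twist v) := fun x y => by
  simp only [twist, isQuadRef_q₀.apply_add, m₀_add_right]
  grind

lemma twist_eq_q₀_iff {v : W k} : twist v = q₀ k ↔ v = 0 := by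
  refine ⟨fun h => isAltNondeg_m₀.2.2.2 v fun x => ?_, fun h => funext fun x => ?_⟩
  · have := congrFun h x
    simp only [twist] at this
    grind
  · simp [twist, h, m₀]

lemma exists_eq_twist {ν : W k → ZMod 2} (hν : IsQuadRef (m₀ k) ν) : ∃ v, ν = twist v := by
  let δ x := ν x + q₀ k x
  have hδ : ∀ x y, δ (x + y) = δ x + δ y := fun x y => by
    grind [hν.apply_add x y, isQuadRef_q₀.apply_add x y]
  -- `m₀ v eᵢ = v fᵢ` and `m₀ v fᵢ = v eᵢ`: `v` is `δ` read off the basis with `e` and `f` swapped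
  let v : W k := Sum.elim (fun i => δ (Pi.single (.inr i) 1)) (fun i => δ (Pi.single (.inl i) 1))
  have hv : ∀ x, δ x + m₀ k v x = 0 :=
    additive_eq_zero_of_basis (Pi.basisFun (ZMod 2) (Fin k ⊕ Fin k))
      (fun x y => by grind [m₀_add_right]) fun j => by
        rcases j with j | j <;> simp [m₀_single_inl, m₀_single_inr, v, CharTwo.add_self_eq_zero]
  refine ⟨v, funext fun x => ?_⟩
  have := hv x
  simp only [twist, δ] at this ⊢
  grind

def transvection (u : W k) : W k ≃ₗ[ZMod 2] W k :=
  have hinv : ∀ x, x + m₀ k x u • u + m₀ k (x + m₀ k x u • u) u • u = x := fun x => by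
    rw [m₀_add_left, m₀_smul_left, m₀_self, mul_zero, add_zero, add_assoc, ← add_smul,
      CharTwo.add_self_eq_zero, zero_smul, add_zero]
  { toFun x := x + m₀ k x u • u
    invFun x := x + m₀ k x u • u
    map_add' x y := by simp only [m₀_add_left, add_smul]; abel
    map_smul' c x := by simp only [m₀_smul_left, RingHom.id_apply, smul_add, mul_smul]
    left_inv := hinv
    right_inv := hinv }

lemma transvection_apply (u x : W k) : transvection u x = x + m₀ k x u • u := rfl

lemma transvection_transvection (u x : W k) : transvection u (transvection u x) = x :=
  (transvection u).apply_symm_apply x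

lemma m₀_transvection (u x y : W k) :
    m₀ k (transvection u x) (transvection u y) = m₀ k x y := by
  simp only [transvection_apply, m₀_add_left, m₀_add_right, m₀_smul_left, m₀_smul_right, m₀_self,
    m₀_comm u y]
  grind

lemma q₀_transvection (u x : W k) :
    q₀ k (transvection u x) = q₀ k x + (q₀ k u + 1) * m₀ k x u := by
  have h : ∀ c : ZMod 2, q₀ k (x + c • u) = q₀ k x + c * q₀ k u + c * m₀ k x u := by
    intro c
    rcases c.eq_zero_or_eq_one with rfl | rfl
    · simp
    · simp [isQuadRef_q₀.apply_add]
  rw [transvection_apply, h]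
  have hc : ∀ c : ZMod 2, c * c = c := by decide
  grind

lemma q₀_transvection_of_q₀_eq_zero {u : W k} (hu : q₀ k u = 0) (x : W k) :
    q₀ k (transvection u x) = twist u x := by
  rw [q₀_transvection, hu, zero_add, one_mul, twist, m₀_comm]

lemma q₀_transvection_of_q₀_eq_one {u : W k} (hu : q₀ k u = 1) (x : W k) :
    q₀ k (transvection u x) = q₀ k x := by
  rw [q₀_transvection, hu, CharTwo.add_self_eq_zero, zero_mul, add_zero]

def sign (c : ZMod 2) : ℤ := if c = 0 then 1 else -1

lemma sign_add (a b : ZMod 2) : sign (a + b) = sign a * sign b := by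
  revert a b; decide

lemma sign_sum {ι : Type} (s : Finset ι) (f : ι → ZMod 2) :
    sign (∑ i ∈ s, f i) = ∏ i ∈ s, sign (f i) := by
  induction s using Finset.cons_induction with
  | empty => rfl
  | cons i s hi ih => rw [sum_cons, prod_cons, sign_add, ih]

def signSum (μ : W k → ZMod 2) : ℤ := ∑ x, sign (μ x)

lemma signSum_q₀ : signSum (q₀ k) = 2 ^ k := by
  let e : W k ≃ (Fin k → ZMod 2 × ZMod 2) :=
    (Equiv.sumArrowEquivProdArrow _ _ _).trans (Equiv.arrowProdEquivProdArrow _ _ _).symm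
  calc signSum (q₀ k) = ∑ p : Fin k → ZMod 2 × ZMod 2, ∏ i, sign ((p i).1 * (p i).2) :=
        Fintype.sum_equiv e _ _ fun x => by rw [q₀, sign_sum]; rfl
    _ = ∏ _i : Fin k, ∑ c : ZMod 2 × ZMod 2, sign (c.1 * c.2) :=
        (Fintype.prod_sum (κ := fun _ ↦ ZMod 2 × ZMod 2) fun _ c ↦ sign (c.1 * c.2)).symm
    _ = 2 ^ k := by simp only [show ∑ c : ZMod 2 × ZMod 2, sign (c.1 * c.2) = 2 by decide,
        prod_const, card_univ, Fintype.card_fin]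

lemma signSum_twist (v : W k) : signSum (twist v) = sign (q₀ k v) * signSum (q₀ k) := by
  have h : ∀ x, twist v (x + v) = q₀ k x + q₀ k v := fun x => by
    simp only [twist, isQuadRef_q₀.apply_add, m₀_add_right, m₀_self, m₀_comm x v]
    grind
  rw [signSum, ← Equiv.sum_comp (Equiv.addRight v), signSum, mul_sum]
  simp only [Equiv.coe_addRight, h, sign_add, mul_comm]

lemma signSum_of_isPlusType {ν : W k → ZMod 2} (hν : IsQuadRef (m₀ k) ν)
    (hp : IsPlusType k (m₀ k) ν) : signSum ν = signSum (q₀ k) := by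
  obtain ⟨f, -, hf⟩ := hp.exists_equiv_model isAltNondeg_m₀ hν
  simp only [signSum, ← hf]
  exact Equiv.sum_comp f.toEquiv fun x => sign (q₀ k x)

lemma isPlusType_twist_iff {v : W k} : IsPlusType k (m₀ k) (twist v) ↔ q₀ k v = 0 := by
  refine ⟨fun hp => ?_, fun hv => isPlusType_q₀.map (transvection v) (m₀_transvection v)
    fun x => by rw [← q₀_transvection_of_q₀_eq_zero hv, transvection_transvection]⟩
  have h := signSum_of_isPlusType (isQuadRef_twist v) hp
  rw [signSum_twist, signSum_q₀] at h
  rcases (q₀ k v).eq_zero_or_eq_one with hv | hv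
  · exact hv
  · simp only [hv, sign, one_ne_zero, if_false, neg_one_mul] at h
    linarith [pow_pos (two_pos : (0 : ℤ) < 2) k]

lemma m₀_map_of_q₀_map {g : W k ≃ₗ[ZMod 2] W k} (hg : ∀ x, q₀ k (g x) = q₀ k x) (x y : W k) :
    m₀ k (g x) (g y) = m₀ k x y := by
  rw [isQuadRef_q₀ x y, isQuadRef_q₀ (g x) (g y), ← map_add, hg, hg, hg]

lemma exists_m₀_eq_one {a : W k} (ha : a ≠ 0) : ∃ z, m₀ k a z = 1 := by
  by_contra! h
  exact ha (isAltNondeg_m₀.2.2.2 a fun z => (m₀ k a z).eq_zero_or_eq_one.resolve_right (h z))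

lemma exists_m₀_eq_one_and_m₀_eq_one {a b : W k} (ha : a ≠ 0) (hb : b ≠ 0) :
    ∃ z, m₀ k a z = 1 ∧ m₀ k b z = 1 := by
  obtain ⟨z₁, hz₁⟩ := exists_m₀_eq_one ha
  obtain ⟨z₂, hz₂⟩ := exists_m₀_eq_one hb
  rcases (m₀ k b z₁).eq_zero_or_eq_one with h₁ | h₁
  · rcases (m₀ k a z₂).eq_zero_or_eq_one with h₂ | h₂
    · exact ⟨z₁ + z₂, by grind [m₀_add_right], by grind [m₀_add_right]⟩
    · exact ⟨z₂, h₂, hz₂⟩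
  · exact ⟨z₁, hz₁, h₁⟩

lemma exists_q₀_eq_zero_and_m₀_eq_one {a b : W k} (ha : a ≠ 0) (hb : b ≠ 0) (hqa : q₀ k a = 0)
    (hab : m₀ k a b = 0) : ∃ z, q₀ k z = 0 ∧ m₀ k a z = 1 ∧ m₀ k b z = 1 := by
  obtain ⟨z, hza, hzb⟩ := exists_m₀_eq_one_and_m₀_eq_one ha hb
  rcases (q₀ k z).eq_zero_or_eq_one with hz | hz
  · exact ⟨z, hz, hza, hzb⟩
  · refine ⟨z + a, ?_, ?_, ?_⟩ <;>
      simp only [isQuadRef_q₀.apply_add, m₀_add_right, m₀_self, m₀_comm z a, m₀_comm b a] <;>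
      grind

lemma exists_q₀_isometry_of_m₀_eq_one {a b : W k} (hqa : q₀ k a = 0) (hqb : q₀ k b = 0)
    (hab : m₀ k a b = 1) : ∃ g : W k ≃ₗ[ZMod 2] W k, (∀ x, q₀ k (g x) = q₀ k x) ∧ g a = b := by
  have hq : q₀ k (a + b) = 1 := by rw [isQuadRef_q₀.apply_add, hqa, hqb, hab]; rfl
  refine ⟨transvection (a + b), q₀_transvection_of_q₀_eq_one hq, ?_⟩
  rw [transvection_apply, m₀_add_right, m₀_self, hab, zero_add, one_smul, ← add_assoc,
    ZModModule.add_self, zero_add]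

/-- Witt's theorem for nonzero singular vectors of `q₀`. -/
lemma exists_q₀_isometry {v w : W k} (hv : q₀ k v = 0) (hw : q₀ k w = 0) (h0 : v = 0 ↔ w = 0) :
    ∃ g : W k ≃ₗ[ZMod 2] W k, (∀ x, q₀ k (g x) = q₀ k x) ∧ g v = w := by
  by_cases hv0 : v = 0
  · exact ⟨LinearEquiv.refl _ _, fun _ => rfl, by rw [hv0, h0.mp hv0]; rfl⟩
  have hw0 : w ≠ 0 := fun h => hv0 (h0.mpr h)
  rcases (m₀ k v w).eq_zero_or_eq_one with hvw | hvw
  · -- pass through a singular vector `z` pairing to `1` with both `v` and `w`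
    obtain ⟨z, hz, hvz, hwz⟩ := exists_q₀_eq_zero_and_m₀_eq_one hv0 hw0 hv hvw
    obtain ⟨g, hg, hgv⟩ := exists_q₀_isometry_of_m₀_eq_one hv hz hvz
    obtain ⟨g', hg', hg'z⟩ := exists_q₀_isometry_of_m₀_eq_one hz hw (by rw [m₀_comm, hwz])
    exact ⟨g.trans g', fun x => (hg' _).trans (hg x), by rw [LinearEquiv.trans_apply, hgv, hg'z]⟩
  · exact exists_q₀_isometry_of_m₀_eq_one hv hw hvw

lemma tupleIso_twist {v w : W k} (hv : q₀ k v = 0) (hw : q₀ k w = 0) (h0 : v = 0 ↔ w = 0) :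
    TupleIso (m₀ k) ![q₀ k, twist v] (m₀ k) ![q₀ k, twist w] := by
  obtain ⟨g, hg, hgv⟩ := exists_q₀_isometry hv hw h0
  refine ⟨g, Equiv.refl _, m₀_map_of_q₀_map hg, fun i x => ?_⟩
  fin_cases i
  · exact hg x
  · change twist w (g x) = twist v x
    rw [twist, twist, hg, ← hgv, m₀_map_of_q₀_map hg]

lemma exists_tupleIso_twist {V : Type} [AddCommGroup V] [Module (ZMod 2) V]
    {m : V → V → ZMod 2} {μ₁ μ₂ : V → ZMod 2} (hm : IsAltNondeg m) (hμ₁ : IsQuadRef m μ₁)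
    (hμ₂ : IsQuadRef m μ₂) (hp₁ : IsPlusType k m μ₁) (hp₂ : IsPlusType k m μ₂) :
    ∃ v : W k, q₀ k v = 0 ∧ TupleIso m ![μ₁, μ₂] (m₀ k) ![q₀ k, twist v] := by
  obtain ⟨f, hf, hfμ₁⟩ := hp₁.exists_equiv_model hm hμ₁
  have hf' : ∀ x y, m (f.symm x) (f.symm y) = m₀ k x y := fun x y => by
    rw [← hf, f.apply_symm_apply, f.apply_symm_apply]
  obtain ⟨v, hv⟩ := exists_eq_twist (hμ₂.comp f.symm hf')
  have hfμ₂ : ∀ x, twist v (f x) = μ₂ x := fun x => by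
    rw [← hv]
    exact congrArg μ₂ (f.symm_apply_apply x)
  refine ⟨v, isPlusType_twist_iff.mp (hp₂.map f hf hfμ₂), f, Equiv.refl _, hf, fun i x => ?_⟩
  fin_cases i
  exacts [hfμ₁ x, hfμ₂ x]

lemma exists_fin_pair {v : W k} (hv : q₀ k v = 0) :
    ∃ (m : (Fin (2 * k) → ZMod 2) → (Fin (2 * k) → ZMod 2) → ZMod 2)
      (μ₁ μ₂ : (Fin (2 * k) → ZMod 2) → ZMod 2),
      IsAltNondeg m ∧ IsQuadRef m μ₁ ∧ IsQuadRef m μ₂ ∧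
      IsPlusType k m μ₁ ∧ IsPlusType k m μ₂ ∧ (μ₁ = μ₂ ↔ v = 0) := by
  let L : W k ≃ₗ[ZMod 2] (Fin (2 * k) → ZMod 2) :=
    LinearEquiv.funCongrLeft _ _ ((finCongr (two_mul k)).trans finSumFinEquiv.symm)
  have hL : ∀ x y, m₀ k (L.symm (L x)) (L.symm (L y)) = m₀ k x y := by simp
  refine ⟨fun x y => m₀ k (L.symm x) (L.symm y), fun x => q₀ k (L.symm x),
    fun x => twist v (L.symm x), isAltNondeg_m₀.of_equiv L.symm fun _ _ => rfl,
    isQuadRef_q₀.comp L.symm fun _ _ => rfl, (isQuadRef_twist v).comp L.symm fun _ _ => rfl,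
    isPlusType_q₀.map L hL (by simp), (isPlusType_twist_iff.mpr hv).map L hL (by simp), ?_⟩
  rw [← twist_eq_q₀_iff, eq_comm]
  exact L.symm.surjective.injective_comp_right.eq_iff (a := twist v) (b := q₀ k)

end PlusModel

open PlusModel

/-- For `k ≥ 1` there are exactly two isomorphism classes of tuples
`(V, m, μ₁, μ₂)` with `V` of dimension `2k` over `𝔽₂`, `m` nondegenerate alternating, and
`μ₁, μ₂` quadratic refinements of plus type: two such tuples are isomorphic iff
(`μ₁ = μ₂ ⟺ μ₁' = μ₂'`), and both kinds exist. -/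
theorem two_classes_of_pairs (k : ℕ) (hk : 1 ≤ k) :
    (∀ (V V' : Type) [AddCommGroup V] [Module (ZMod 2) V]
        [AddCommGroup V'] [Module (ZMod 2) V']
        (m : V → V → ZMod 2) (μ₁ μ₂ : V → ZMod 2)
        (m' : V' → V' → ZMod 2) (μ₁' μ₂' : V' → ZMod 2),
      Module.finrank (ZMod 2) V = 2 * k → Module.finrank (ZMod 2) V' = 2 * k →
      IsAltNondeg m → IsQuadRef m μ₁ → IsQuadRef m μ₂ →
      IsPlusType k m μ₁ → IsPlusType k m μ₂ →
      IsAltNondeg m' → IsQuadRef m' μ₁' → IsQuadRef m' μ₂' →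
      IsPlusType k m' μ₁' → IsPlusType k m' μ₂' →
      (TupleIso m ![μ₁, μ₂] m' ![μ₁', μ₂'] ↔ (μ₁ = μ₂ ↔ μ₁' = μ₂'))) ∧
    (∃ (m : (Fin (2 * k) → ZMod 2) → (Fin (2 * k) → ZMod 2) → ZMod 2)
        (μ₁ μ₂ : (Fin (2 * k) → ZMod 2) → ZMod 2),
      IsAltNondeg m ∧ IsQuadRef m μ₁ ∧ IsQuadRef m μ₂ ∧
      IsPlusType k m μ₁ ∧ IsPlusType k m μ₂ ∧ μ₁ = μ₂) ∧
    (∃ (m : (Fin (2 * k) → ZMod 2) → (Fin (2 * k) → ZMod 2) → ZMod 2)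
        (μ₁ μ₂ : (Fin (2 * k) → ZMod 2) → ZMod 2),
      IsAltNondeg m ∧ IsQuadRef m μ₁ ∧ IsQuadRef m μ₂ ∧
      IsPlusType k m μ₁ ∧ IsPlusType k m μ₂ ∧ μ₁ ≠ μ₂) := by
  refine ⟨fun V V' _ _ _ _ m μ₁ μ₂ m' μ₁' μ₂' _ _ hm hμ₁ hμ₂ hp₁ hp₂ hm' hμ₁' hμ₂' hp₁' hp₂' =>
    ⟨TupleIso.eq_iff_eq, fun h => ?_⟩, ?_, ?_⟩
  · obtain ⟨v, hv, e⟩ := exists_tupleIso_twist hm hμ₁ hμ₂ hp₁ hp₂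
    obtain ⟨w, hw, e'⟩ := exists_tupleIso_twist hm' hμ₁' hμ₂' hp₁' hp₂'
    have h0 : v = 0 ↔ w = 0 := by
      rw [← twist_eq_q₀_iff, ← twist_eq_q₀_iff, eq_comm, ← e.eq_iff_eq, h, e'.eq_iff_eq, eq_comm]
    exact e.trans ((tupleIso_twist hv hw h0).trans e'.symm)
  · obtain ⟨m, μ₁, μ₂, hm, hμ₁, hμ₂, hp₁, hp₂, h⟩ := exists_fin_pair (v := (0 : W k)) (by simp [q₀])
    exact ⟨m, μ₁, μ₂, hm, hμ₁, hμ₂, hp₁, hp₂, h.mpr rfl⟩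
  · obtain ⟨m, μ₁, μ₂, hm, hμ₁, hμ₂, hp₁, hp₂, h⟩ := exists_fin_pair (q₀_single (.inl ⟨0, hk⟩))
    exact ⟨m, μ₁, μ₂, hm, hμ₁, hμ₂, hp₁, hp₂, h.not.mpr (Pi.single_ne_zero_iff.mpr one_ne_zero)⟩

end
end
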